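/- arXiv:2408.10968 — 2 statements merged into one kernel-verified Lean document; each statement's English description precedes it below -/
import Mathlib

section
/- Let H₊, H₋, K₊, K₋ be complex Hilbert spaces, H = H₊ × H₋ and K = K₊ × K₋ with their standard forms ω and ω'. Let Φ : H → K be a continuous linear bijection satisfying ω'(Φx, Φy) = ω(x,y) for all x, y ∈ H, written in block form Φ(x₁, x₂) = (g₁₁ x₁ + g₁₂ x₂, g₂₁ x₁ + g₂₂ x₂) with continuous linear maps g₁₁ : H₊ → K₊, g₁₂ : H₋ → K₊, g₂₁ : H₊ → K₋, g₂₂ : H₋ → K₋. If B : H₊ → H₋ is a continuous linear map with ‖B‖ < 1, then g₁₁ + g₁₂∘B : H₊ → K₊ is a continuous linear bijection, the operator B' := (g₂₁ + g₂₂∘B)∘(g₁₁ + g₁₂∘B)⁻¹ : K₊ → K₋ satisfies ‖B'‖ < 1, and Φ({(x, B x) : x ∈ H₊}) = {(y, B' y) : y ∈ K₊}. -/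
noncomputable section

open Complex

variable {Hp Hm Kp Km : Type*}
  [NormedAddCommGroup Hp] [InnerProductSpace ℂ Hp] [CompleteSpace Hp]
  [NormedAddCommGroup Hm] [InnerProductSpace ℂ Hm] [CompleteSpace Hm]
  [NormedAddCommGroup Kp] [InnerProductSpace ℂ Kp] [CompleteSpace Kp]
  [NormedAddCommGroup Km] [InnerProductSpace ℂ Km] [CompleteSpace Km]

/-- The standard strong symplectic form `ω((x₁,x₂),(y₁,y₂)) = i⟨x₁,y₁⟩ − i⟨x₂,y₂⟩` on
a product `G₊ × G₋` of Hilbert spaces, linear in the first argument and conjugate-linear in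
the second.  (Since Mathlib's `inner` is conjugate-linear in its *first* argument, the paper's
`⟨a,b⟩` is `inner b a`.) -/
def stdForm {Gp Gm : Type*} [NormedAddCommGroup Gp] [InnerProductSpace ℂ Gp]
    [NormedAddCommGroup Gm] [InnerProductSpace ℂ Gm] (x y : Gp × Gm) : ℂ :=
  Complex.I * (inner ℂ y.1 x.1 : ℂ) - Complex.I * (inner ℂ y.2 x.2 : ℂ)

/-!
On the diagonal the standard form is `ω(x, x) = i (‖x₁‖² - ‖x₂‖²)`, so `Φ` preserves the indefinite
quadratic form `q(x) = ‖x₁‖² - ‖x₂‖²`. Writing `Φ (x, B x) = (T x, S x)` with `T = g₁₁ + g₁₂ B` and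
`S = g₂₁ + g₂₂ B`, this gives `‖T x‖² - ‖S x‖² = ‖x‖² - ‖B x‖² ≥ (1 - ‖B‖²) ‖x‖²`. Hence `T` is bounded
below, so injective with closed range. A nonzero `y ⊥ range T` is impossible: writing
`(y, 0) = Φ (x, B x) + Φ (0, w)`, the vector `Φ (0, w) = (y - T x, -S x)` has
`q = ‖y‖² + ‖T x‖² - ‖S x‖² > 0`, while `q (0, w) = -‖w‖² ≤ 0`. So `T` is invertible, and the same
inequality at `x = T⁻¹ y`, together with `‖y‖ ≤ ‖T‖ ‖x‖`, gives `‖S T⁻¹‖ < 1`.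
-/

theorem stdForm_self {Gp Gm : Type*} [NormedAddCommGroup Gp] [InnerProductSpace ℂ Gp]
    [NormedAddCommGroup Gm] [InnerProductSpace ℂ Gm] (x : Gp × Gm) :
    stdForm x x = Complex.I * ((‖x.1‖ ^ 2 - ‖x.2‖ ^ 2 : ℝ) : ℂ) := by
  simp only [stdForm, inner_self_eq_norm_sq_to_K, RCLike.ofReal_eq_complex_ofReal]
  push_cast
  ring

theorem norm_sq_fst_sub_norm_sq_snd_eq_of_stdForm {Gp Gm G'p G'm : Type*}
    [NormedAddCommGroup Gp] [InnerProductSpace ℂ Gp] [NormedAddCommGroup Gm] [InnerProductSpace ℂ Gm]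
    [NormedAddCommGroup G'p] [InnerProductSpace ℂ G'p]
    [NormedAddCommGroup G'm] [InnerProductSpace ℂ G'm]
    {Φ : Gp × Gm → G'p × G'm} (hΦ : ∀ x y, stdForm (Φ x) (Φ y) = stdForm x y) (u : Gp × Gm) :
    ‖(Φ u).1‖ ^ 2 - ‖(Φ u).2‖ ^ 2 = ‖u.1‖ ^ 2 - ‖u.2‖ ^ 2 := by
  have h := hΦ u u
  rw [stdForm_self, stdForm_self] at h
  exact_mod_cast mul_left_cancel₀ Complex.I_ne_zero h

namespace ContinuousLinearMap

section NormedSpace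

variable {𝕜 E F G : Type*} [NontriviallyNormedField 𝕜]
  [NormedAddCommGroup E] [NormedSpace 𝕜 E] [NormedAddCommGroup F] [NormedSpace 𝕜 F]
  [NormedAddCommGroup G] [NormedSpace 𝕜 G]

theorem antilipschitz_of_mul_norm_sq_le (T : E →L[𝕜] F) {ε : ℝ} (hε : 0 < ε)
    (h : ∀ x, ε * ‖x‖ ^ 2 ≤ ‖T x‖ ^ 2) : AntilipschitzWith (Real.toNNReal (√ε)⁻¹) T := by
  refine T.antilipschitz_of_bound fun x => ?_
  rw [Real.coe_toNNReal _ (by positivity), le_inv_mul_iff₀ (Real.sqrt_pos.mpr hε)]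
  rw [← pow_le_pow_iff_left₀ (by positivity) (norm_nonneg _) two_ne_zero, mul_pow,
    Real.sq_sqrt hε.le]
  exact h x

theorem opNorm_comp_rightInverse_lt_one (T : E →L[𝕜] F) (S : E →L[𝕜] G) (e : F →L[𝕜] E)
    (he : ∀ y, T (e y) = y) {ε : ℝ} (hε : 0 < ε)
    (h : ∀ x, ε * ‖x‖ ^ 2 ≤ ‖T x‖ ^ 2 - ‖S x‖ ^ 2) : ‖S.comp e‖ < 1 := by
  -- `δ` is chosen positive (also when `T = 0`) with `δ ‖T‖² ≤ ε`, so `ε ‖x‖² ≥ δ ‖T x‖²`.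
  set δ := ε / (‖T‖ ^ 2 + ε)
  have hδ : 0 < δ := by positivity
  have hδT : δ * ‖T‖ ^ 2 ≤ ε := by
    rw [div_mul_eq_mul_div, div_le_iff₀ (by positivity)]
    nlinarith [sq_nonneg ‖T‖]
  have hS : ∀ y, ‖S (e y)‖ ^ 2 ≤ (1 - δ) * ‖y‖ ^ 2 := fun y => by
    have hy : ‖y‖ ^ 2 ≤ ‖T‖ ^ 2 * ‖e y‖ ^ 2 := by
      rw [← mul_pow]
      conv_lhs => rw [← he y]
      exact pow_le_pow_left₀ (norm_nonneg _) (T.le_opNorm _) 2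
    have := h (e y)
    rw [he y] at this
    nlinarith
  refine lt_of_le_of_lt ((S.comp e).opNorm_le_bound (Real.sqrt_nonneg (1 - δ)) fun y => ?_) ?_
  · calc ‖S (e y)‖ = √(‖S (e y)‖ ^ 2) := (Real.sqrt_sq (norm_nonneg _)).symm
      _ ≤ √((1 - δ) * ‖y‖ ^ 2) := Real.sqrt_le_sqrt (hS y)
      _ = √(1 - δ) * ‖y‖ := by rw [Real.sqrt_mul' _ (sq_nonneg _), Real.sqrt_sq (norm_nonneg _)]
  · rw [Real.sqrt_lt' one_pos]
    linarith

end NormedSpace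

theorem surjective_of_isClosed_range {𝕜 E F : Type*} [RCLike 𝕜] [NormedAddCommGroup E]
    [InnerProductSpace 𝕜 E] [NormedAddCommGroup F] [InnerProductSpace 𝕜 F] [CompleteSpace F]
    (T : E →L[𝕜] F) (hT : IsClosed (Set.range T))
    (h : ∀ y, (∀ x, inner 𝕜 (T x) y = 0) → y = 0) : Function.Surjective T := by
  have hrange : IsClosed ((T : E →ₗ[𝕜] F).range : Set F) := by
    rwa [LinearMap.coe_range]
  have hperp : (T : E →ₗ[𝕜] F).rangeᗮ = ⊥ := by
    refine (Submodule.eq_bot_iff _).mpr fun y hy => h y fun x => ?_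
    exact hy _ (LinearMap.mem_range_self _ x)
  rw [← Submodule.topologicalClosure_eq_top_iff, hrange.submodule_topologicalClosure_eq] at hperp
  exact LinearMap.range_eq_top.mp hperp

end ContinuousLinearMap

section Graph

variable {𝕜 E₁ E₂ F₁ F₂ : Type*} [RCLike 𝕜]
  [NormedAddCommGroup E₁] [NormedSpace 𝕜 E₁] [NormedAddCommGroup E₂] [NormedSpace 𝕜 E₂]
  [NormedAddCommGroup F₁] [NormedAddCommGroup F₂] {B : E₁ →L[𝕜] E₂} {T : E₁ → F₁} {S : E₁ → F₂}

theorem mul_norm_sq_le_of_map_graph {Φ : E₁ × E₂ → F₁ × F₂}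
    (hΦ : ∀ u, ‖(Φ u).1‖ ^ 2 - ‖(Φ u).2‖ ^ 2 = ‖u.1‖ ^ 2 - ‖u.2‖ ^ 2)
    (hgraph : ∀ x, Φ (x, B x) = (T x, S x)) (x : E₁) :
    (1 - ‖B‖ ^ 2) * ‖x‖ ^ 2 ≤ ‖T x‖ ^ 2 - ‖S x‖ ^ 2 := by
  have hq := hΦ (x, B x)
  rw [hgraph] at hq
  have hBx : ‖B x‖ ^ 2 ≤ ‖B‖ ^ 2 * ‖x‖ ^ 2 := by
    rw [← mul_pow]
    exact pow_le_pow_left₀ (norm_nonneg _) (B.le_opNorm x) 2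
  simp only at hq
  linarith

theorem eq_zero_of_orthogonal_map_graph [InnerProductSpace 𝕜 F₁] [NormedSpace 𝕜 F₂]
    {Φ : (E₁ × E₂) →L[𝕜] (F₁ × F₂)} (hΦsurj : Function.Surjective Φ)
    (hΦ : ∀ u, ‖(Φ u).1‖ ^ 2 - ‖(Φ u).2‖ ^ 2 = ‖u.1‖ ^ 2 - ‖u.2‖ ^ 2)
    (hgraph : ∀ x, Φ (x, B x) = (T x, S x)) (hTS : ∀ x, ‖S x‖ ^ 2 ≤ ‖T x‖ ^ 2)
    {y : F₁} (hy : ∀ x, inner 𝕜 (T x) y = 0) : y = 0 := by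
  obtain ⟨u, hu⟩ := hΦsurj (y, 0)
  set x := u.1
  have hΦw : Φ (0, u.2 - B x) = (y - T x, -S x) := by
    have : ((0 : E₁), u.2 - B x) = u - (x, B x) := by ext <;> simp [x]
    rw [this, map_sub, hu, hgraph]
    ext <;> simp
  have hq := hΦ (0, u.2 - B x)
  rw [hΦw] at hq
  have hpyth : ‖y - T x‖ ^ 2 = ‖y‖ ^ 2 + ‖T x‖ ^ 2 := by
    rw [norm_sub_sq (𝕜 := 𝕜), inner_eq_zero_symm.mp (hy x), map_zero]
    ring
  simp only [norm_neg, norm_zero] at hq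
  have : ‖y‖ ^ 2 ≤ 0 := by nlinarith [hTS x, sq_nonneg ‖u.2 - B x‖]
  simpa using this

end Graph

/-- If `Φ : H₊ × H₋ → K₊ × K₋` is a continuous linear bijection preserving the standard
forms, given in block form by `g₁₁, g₁₂, g₂₁, g₂₂`, and `B : H₊ → H₋` has `‖B‖ < 1`, then
`g₁₁ + g₁₂∘B` is a continuous linear bijection, the operator
`B' = (g₂₁ + g₂₂∘B)∘(g₁₁ + g₁₂∘B)⁻¹` satisfies `‖B'‖ < 1`, and `Φ` maps the graph of `B`
onto the graph of `B'`. -/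
theorem statement2
    (Φ : (Hp × Hm) →L[ℂ] (Kp × Km)) (hΦbij : Function.Bijective Φ)
    (hΦsymp : ∀ x y : Hp × Hm, stdForm (Φ x) (Φ y) = stdForm x y)
    (g11 : Hp →L[ℂ] Kp) (g12 : Hm →L[ℂ] Kp) (g21 : Hp →L[ℂ] Km) (g22 : Hm →L[ℂ] Km)
    (hblock : ∀ x : Hp × Hm, Φ x = (g11 x.1 + g12 x.2, g21 x.1 + g22 x.2))
    (B : Hp →L[ℂ] Hm) (hB : ‖B‖ < 1) :
    Function.Bijective (g11 + g12.comp B) ∧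
      ∃ B' : Kp →L[ℂ] Km,
        B'.comp (g11 + g12.comp B) = g21 + g22.comp B ∧ ‖B'‖ < 1 ∧
          Φ '' (Set.range fun x : Hp => (x, B x)) = Set.range fun y : Kp => (y, B' y) := by
  set T := g11 + g12.comp B
  set S := g21 + g22.comp B
  have hgraph : ∀ x, Φ (x, B x) = (T x, S x) := fun x => by simp [hblock, T, S]
  have hq := norm_sq_fst_sub_norm_sq_snd_eq_of_stdForm hΦsymp
  have hε : 0 < 1 - ‖B‖ ^ 2 := by nlinarith [norm_nonneg B]
  have hlow := mul_norm_sq_le_of_map_graph hq hgraph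
  have hanti := T.antilipschitz_of_mul_norm_sq_le hε fun x => by
    nlinarith [hlow x, sq_nonneg ‖S x‖]
  have hsurj : Function.Surjective T :=
    T.surjective_of_isClosed_range (hanti.isClosed_range T.uniformContinuous) fun y hy =>
      eq_zero_of_orthogonal_map_graph hΦbij.2 hq hgraph
        (fun x => by nlinarith [hlow x, sq_nonneg ‖x‖]) hy
  set Tinv : Kp →L[ℂ] Hp := ((ContinuousLinearEquiv.ofBijective T
    (LinearMap.ker_eq_bot.mpr hanti.injective) (LinearMap.range_eq_top.mpr hsurj)).symm :)
  have hB' : (S.comp Tinv).comp T = S := by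
    ext x
    simp [Tinv]
  refine ⟨⟨hanti.injective, hsurj⟩, S.comp Tinv, hB', ?_, ?_⟩
  · exact T.opNorm_comp_rightInverse_lt_one S Tinv
      (ContinuousLinearEquiv.ofBijective_apply_symm_apply _ _ _) hε hlow
  · have : Φ ∘ (fun x => (x, B x)) = (fun y => (y, S.comp Tinv y)) ∘ T := by
      funext x
      simp only [Function.comp_apply, hgraph, ← ContinuousLinearMap.comp_apply, hB']
    rw [← Set.range_comp, this, hsurj.range_comp]
end
end

section
/- Let H be a complex Hilbert space and A : H → H a bounded linear operator that is skew-adjoint (A* = −A) and invertible (bijective with bounded inverse). Let |A| denote the positive square root of A*A, let 𝒥 := |A|⁻¹ ∘ A, and set M₊ := ker(𝒥 − i·Id) and M₋ := ker(𝒥 + i·Id). Then: H is the orthogonal direct sum of M₊ and M₋ (M₋ = M₊^⊥ and M₊ + M₋ = H); M₊ is a maximal completely positive-definite subspace and M₋ is a maximal completely negative-definite subspace of H with respect to the form [x,y] := ⟨Ax, y⟩; and M₋ = {y ∈ H : [x,y] = 0 for all x ∈ M₊}. -/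
/-!
Since `S * S = -A * A` commutes with `A`, so does its positive square root `S`; hence
`J = S⁻¹ A` commutes with `S`, is skew-adjoint and satisfies `J * J = -1`. So `M₊` and `M₋`, the
`±i`-eigenspaces of `J`, are orthogonal, and `x = ½ (x - i J x) + ½ (x + i J x)` splits `H`.
Moreover `-i[x,x] = ⟨S x, x⟩` on `M₊` and `i[x,x] = ⟨S x, x⟩` on `M₋`, where `S`, being positive
and invertible, is bounded below. A completely positive-definite subspace containing `M₊` can
therefore meet `M₋` only in `0`, hence equals `M₊`; symmetrically for `M₋`. Finally `A` maps
`M₊` into itself, so `M₋ = M₊ᗮ` is `[·,·]`-orthogonal to `M₊`; conversely, if `u + v` with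
`u ∈ M₊`, `v ∈ M₋` is `[·,·]`-orthogonal to `M₊`, then `0 = [u, u + v] = [u, u]` forces `u = 0`.
-/

noncomputable section

open Complex

variable {H : Type*} [NormedAddCommGroup H] [InnerProductSpace ℂ H] [CompleteSpace H]

/-- The form `[x,y] = ⟨Ax, y⟩` (paper convention: linear in the first argument,
conjugate-linear in the second; since Mathlib's `inner` is conjugate-linear in its *first*
argument, the paper's `⟨a,b⟩` is `inner b a`). -/
def formA (A : H →L[ℂ] H) (x y : H) : ℂ := (inner ℂ y (A x) : ℂ)

/-- `M` is completely positive-definite w.r.t. `[·,·]`: it is closed and there is `c > 0`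
with `−i[x,x] ≥ c‖x‖²` for all `x ∈ M`. -/
def IsCPD (A : H →L[ℂ] H) (M : Submodule ℂ H) : Prop :=
  IsClosed (M : Set H) ∧
    ∃ c : ℝ, 0 < c ∧ ∀ x ∈ M, c * ‖x‖ ^ 2 ≤ (-Complex.I * formA A x x).re

/-- `M` is maximal completely positive-definite w.r.t. `[·,·]`. -/
def IsMaxCPD (A : H →L[ℂ] H) (M : Submodule ℂ H) : Prop :=
  IsCPD A M ∧ ∀ N : Submodule ℂ H, IsCPD A N → M ≤ N → N = M

/-- `M` is completely negative-definite w.r.t. `[·,·]`. -/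
def IsCND (A : H →L[ℂ] H) (M : Submodule ℂ H) : Prop :=
  IsClosed (M : Set H) ∧
    ∃ c : ℝ, 0 < c ∧ ∀ x ∈ M, c * ‖x‖ ^ 2 ≤ (Complex.I * formA A x x).re

/-- `M` is maximal completely negative-definite w.r.t. `[·,·]`. -/
def IsMaxCND (A : H →L[ℂ] H) (M : Submodule ℂ H) : Prop :=
  IsCND A M ∧ ∀ N : Submodule ℂ H, IsCND A N → M ≤ N → N = M

local notation "⟪" x ", " y "⟫" => inner ℂ x y

section CStarAlgebra

variable {𝒜 : Type*} [CStarAlgebra 𝒜] [PartialOrder 𝒜] [StarOrderedRing 𝒜]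

theorem Commute.of_mul_self_of_nonneg {s a : 𝒜} (hs : 0 ≤ s) (h : Commute (s * s) a) :
    Commute s a := by
  rw [← CFC.sqrt_unique rfl hs, CFC.sqrt_eq_cfc]
  exact h.cfc_nnreal _

end CStarAlgebra

section PolarFactor

variable {R : Type*} [Ring R] {s a j : R}

theorem commute_of_mul_eq_of_isUnit (hs : IsUnit s) (hsa : Commute s a) (hj : s * j = a) :
    Commute s j :=
  hs.mul_left_cancel (by rw [hj, ← mul_assoc, hj, hsa.eq])

theorem mul_self_eq_neg_one_of_mul_eq (hs : IsUnit s) (hsa : Commute s a) (hj : s * j = a)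
    (hsq : s * s = -(a * a)) : j * j = -1 :=
  (hs.mul hs).mul_left_cancel <| by
    rw [(commute_of_mul_eq_of_isUnit hs hsa hj).mul_mul_mul_comm, hj, mul_neg_one, hsq, neg_neg]

theorem star_eq_neg_of_mul_eq [StarRing R] (hs : IsUnit s) (hsa : Commute s a) (hj : s * j = a)
    (hss : star s = s) (haa : star a = -a) : star j = -j :=
  hs.mul_right_cancel <| by
    rw [← hss, ← star_mul, hss, hj, haa, ← hj, (commute_of_mul_eq_of_isUnit hs hsa hj).eq,
      neg_mul]

end PolarFactor

theorem ContinuousLinearMap.exists_pos_mul_sq_norm_le_re_inner {S : H →L[ℂ] H} (hS : 0 ≤ S)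
    (hu : IsUnit S) : ∃ c : ℝ, 0 < c ∧ ∀ x, c * ‖x‖ ^ 2 ≤ (⟪x, S x⟫).re := by
  rcases subsingleton_or_nontrivial H with hH | hH
  · exact ⟨1, one_pos, fun x => by simp [Subsingleton.elim x 0]⟩
  obtain ⟨r, hr, hle⟩ := (CFC.exists_pos_algebraMap_le_iff hS.isSelfAdjoint).2
    fun x hx => IsStrictlyPositive.spectrum_pos ⟨hS, hu⟩ hx
  refine ⟨r, hr, fun x => ?_⟩
  have hrx : ⟪x, algebraMap ℝ (H →L[ℂ] H) r x⟫ = ((r * ‖x‖ ^ 2 : ℝ) : ℂ) := by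
    simp [Algebra.algebraMap_eq_smul_one, ← Complex.coe_smul]
  have := ((le_def _ _).1 hle).re_inner_nonneg_right x
  rwa [sub_apply, inner_sub_right, map_sub, sub_nonneg, hrx, RCLike.re_to_complex,
    Complex.ofReal_re] at this

theorem eq_zero_of_mul_sq_norm_le_of_nonpos {E : Type*} [NormedAddCommGroup E] {v : E} {c r : ℝ}
    (hc : 0 < c) (h : c * ‖v‖ ^ 2 ≤ r) (hr : r ≤ 0) : v = 0 := by
  by_contra hv
  nlinarith [mul_pos hc (pow_pos (norm_pos_iff.2 hv) 2)]

theorem Submodule.IsOrtho.eq_orthogonal_of_sup_eq_top {𝕜 F : Type*} [RCLike 𝕜]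
    [NormedAddCommGroup F] [InnerProductSpace 𝕜 F] {U V : Submodule 𝕜 F} (h : U ⟂ V)
    (hUV : U ⊔ V = ⊤) : V = Uᗮ := by
  refine le_antisymm h.ge ?_
  calc Uᗮ = (V ⊔ U) ⊓ Uᗮ := by rw [sup_comm, hUV, top_inf_eq]
    _ ≤ V ⊔ U ⊓ Uᗮ := sup_inf_le_assoc_of_le U h.ge
    _ = V := by rw [U.inf_orthogonal_eq_bot, sup_bot_eq]

section ComplexStructure

variable {E : Type*} [NormedAddCommGroup E] [InnerProductSpace ℂ E] {J : E →L[ℂ] E} {x : E}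

def plusSpace (J : E →L[ℂ] E) : Submodule ℂ E :=
  LinearMap.ker ((J - I • (1 : E →L[ℂ] E)) : E →ₗ[ℂ] E)

def minusSpace (J : E →L[ℂ] E) : Submodule ℂ E :=
  LinearMap.ker ((J + I • (1 : E →L[ℂ] E)) : E →ₗ[ℂ] E)

theorem mem_plusSpace : x ∈ plusSpace J ↔ J x = I • x := by
  simp [plusSpace, sub_eq_zero]

theorem mem_minusSpace : x ∈ minusSpace J ↔ J x = -(I • x) := by
  simp [minusSpace, add_eq_zero_iff_eq_neg]

theorem isClosed_plusSpace : IsClosed (plusSpace J : Set E) :=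
  (J - I • (1 : E →L[ℂ] E)).isClosed_ker

theorem isClosed_minusSpace : IsClosed (minusSpace J : Set E) :=
  (J + I • (1 : E →L[ℂ] E)).isClosed_ker

theorem apply_mem_plusSpace {T : E →L[ℂ] E} (hTJ : Commute T J) (hx : x ∈ plusSpace J) :
    T x ∈ plusSpace J := by
  rw [mem_plusSpace] at hx ⊢
  rw [← mul_apply_eq_comp, ← hTJ.eq, mul_apply_eq_comp, hx, map_smul]

theorem plusSpace_sup_minusSpace (hJ : J * J = -1) : plusSpace J ⊔ minusSpace J = ⊤ := by
  have hJJ (y : E) : J (J y) = -y := by rw [← mul_apply_eq_comp, hJ]; rfl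
  refine eq_top_iff.2 fun y _ => Submodule.mem_sup.2
    ⟨(2 : ℂ)⁻¹ • (y - I • J y), ?_, (2 : ℂ)⁻¹ • (y + I • J y), ?_, ?_⟩
  · rw [mem_plusSpace, map_smul, map_sub, map_smul, hJJ]
    match_scalars <;> norm_num [Complex.ext_iff]
  · rw [mem_minusSpace, map_smul, map_add, map_smul, hJJ]
    match_scalars <;> norm_num [Complex.ext_iff]
  · match_scalars <;> norm_num [Complex.ext_iff]

theorem plusSpace_isOrtho_minusSpace (hJ : ∀ x y, ⟪J x, y⟫ = -⟪x, J y⟫) :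
    plusSpace J ⟂ minusSpace J := by
  refine Submodule.isOrtho_iff_inner_eq.2 fun y hy x hx => ?_
  have key := hJ y x
  rw [mem_plusSpace.1 hy, mem_minusSpace.1 hx, inner_smul_left, inner_neg_right, neg_neg,
    inner_smul_right, Complex.conj_I] at key
  have h2I : (2 * I) * ⟪y, x⟫ = 0 := by linear_combination -key
  exact (mul_eq_zero.1 h2I).resolve_left (by simp)

theorem exists_mem_plusSpace_add_mem_minusSpace (hJ : J * J = -1) (y : E) :
    ∃ u ∈ plusSpace J, ∃ v ∈ minusSpace J, u + v = y :=
  Submodule.mem_sup.1 (by rw [plusSpace_sup_minusSpace hJ]; trivial)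

end ComplexStructure

section Form

variable {E : Type*} [NormedAddCommGroup E] [InnerProductSpace ℂ E] {S J : E →L[ℂ] E} {c : ℝ}
  {x : E}

theorem neg_I_mul_formA_of_mem_plusSpace (hx : x ∈ plusSpace J) :
    -I * formA (S * J) x x = ⟪x, S x⟫ := by
  rw [formA, mul_apply_eq_comp, mem_plusSpace.1 hx, map_smul, inner_smul_right, ← mul_assoc,
    neg_mul, I_mul_I, neg_neg, one_mul]

theorem I_mul_formA_of_mem_minusSpace (hx : x ∈ minusSpace J) :
    I * formA (S * J) x x = ⟪x, S x⟫ := by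
  rw [formA, mul_apply_eq_comp, mem_minusSpace.1 hx, map_neg, map_smul, inner_neg_right,
    inner_smul_right, mul_neg, ← mul_assoc, I_mul_I, neg_mul, neg_neg, one_mul]

variable (hc : 0 < c) (hS : ∀ x, c * ‖x‖ ^ 2 ≤ (⟪x, S x⟫).re)
include hc hS

theorem isCPD_plusSpace : IsCPD (S * J) (plusSpace J) :=
  ⟨isClosed_plusSpace, c, hc, fun x hx => by
    rw [neg_I_mul_formA_of_mem_plusSpace hx]
    exact hS x⟩

theorem isCND_minusSpace : IsCND (S * J) (minusSpace J) :=
  ⟨isClosed_minusSpace, c, hc, fun x hx => by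
    rw [I_mul_formA_of_mem_minusSpace hx]
    exact hS x⟩

theorem isMaxCPD_plusSpace (hJ : J * J = -1) : IsMaxCPD (S * J) (plusSpace J) := by
  refine ⟨isCPD_plusSpace hc hS, fun N ⟨_, c', hc', hN⟩ hle => le_antisymm (fun z hz => ?_) hle⟩
  obtain ⟨u, hu, v, hv, rfl⟩ := exists_mem_plusSpace_add_mem_minusSpace hJ z
  have hvN : v ∈ N := by simpa using N.sub_mem hz (hle hu)
  have hv0 : v = 0 := eq_zero_of_mul_sq_norm_le_of_nonpos hc' (hN v hvN) <| by
    rw [neg_mul, I_mul_formA_of_mem_minusSpace hv, neg_re, neg_nonpos]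
    exact (mul_nonneg hc.le (sq_nonneg _)).trans (hS v)
  rwa [hv0, add_zero]

theorem isMaxCND_minusSpace (hJ : J * J = -1) : IsMaxCND (S * J) (minusSpace J) := by
  refine ⟨isCND_minusSpace hc hS, fun N ⟨_, c', hc', hN⟩ hle => le_antisymm (fun z hz => ?_) hle⟩
  obtain ⟨u, hu, v, hv, rfl⟩ := exists_mem_plusSpace_add_mem_minusSpace hJ z
  have huN : u ∈ N := by simpa using N.sub_mem hz (hle hv)
  have hu0 : u = 0 := eq_zero_of_mul_sq_norm_le_of_nonpos hc' (hN u huN) <| by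
    rw [← neg_neg (I * _), ← neg_mul, neg_I_mul_formA_of_mem_plusSpace hu, neg_re, neg_nonpos]
    exact (mul_nonneg hc.le (sq_nonneg _)).trans (hS u)
  rwa [hu0, zero_add]

theorem coe_minusSpace_eq_setOf_formA_eq_zero (hJ : J * J = -1)
    (hJskew : ∀ x y, ⟪J x, y⟫ = -⟪x, J y⟫) (hSJ : Commute S J) :
    (minusSpace J : Set E) = {y | ∀ x ∈ plusSpace J, formA (S * J) x y = 0} := by
  have hortho := plusSpace_isOrtho_minusSpace hJskew
  have hmaps {x} (hx : x ∈ plusSpace J) : (S * J) x ∈ plusSpace J :=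
    apply_mem_plusSpace (hSJ.mul_left (.refl J)) hx
  ext y
  refine ⟨fun hy x hx => inner_eq_zero_symm.1 (hortho.inner_eq (hmaps hx) hy), fun hy => ?_⟩
  obtain ⟨u, hu, v, hv, rfl⟩ := exists_mem_plusSpace_add_mem_minusSpace hJ y
  have hvu : ⟪v, S (J u)⟫ = 0 := inner_eq_zero_symm.1 (hortho.inner_eq (hmaps hu) hv)
  have huu : formA (S * J) u u = 0 := by
    simpa [formA, inner_add_left, hvu] using hy u hu
  have hu0 : u = 0 := eq_zero_of_mul_sq_norm_le_of_nonpos hc (hS u) <| by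
    rw [← neg_I_mul_formA_of_mem_plusSpace hu, huu, mul_zero, zero_re]
  rw [hu0, zero_add]
  exact hv

end Form

/-- Let `A` be bounded, skew-adjoint and invertible, `S = |A|` the positive square root of
`A*A`, `J = |A|⁻¹ ∘ A` (i.e. `S ∘ J = A`), and `M₊ = ker(J − i)`, `M₋ = ker(J + i)`.
Then `H = M₊ ⊕⊥ M₋`, `M₊` is maximal completely positive-definite, `M₋` is maximal
completely negative-definite for `[x,y] = ⟨Ax,y⟩`, and `M₋` is the symplectic
complement of `M₊`. -/
theorem statement4 (A S J : H →L[ℂ] H)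
    (hskew : ContinuousLinearMap.adjoint A = -A)
    (hAbij : Function.Bijective A)
    (hSsa : IsSelfAdjoint S)
    (hSpos : ∀ x : H, 0 ≤ (inner ℂ (S x) x : ℂ).re)
    (hSsq : S * S = ContinuousLinearMap.adjoint A * A)
    (hJ : S * J = A) :
    (LinearMap.ker ((J + Complex.I • (1 : H →L[ℂ] H)) : H →ₗ[ℂ] H) =
        (LinearMap.ker ((J - Complex.I • (1 : H →L[ℂ] H)) : H →ₗ[ℂ] H))ᗮ) ∧
      (LinearMap.ker ((J - Complex.I • (1 : H →L[ℂ] H)) : H →ₗ[ℂ] H) ⊔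
          LinearMap.ker ((J + Complex.I • (1 : H →L[ℂ] H)) : H →ₗ[ℂ] H) = ⊤) ∧
      IsMaxCPD A (LinearMap.ker ((J - Complex.I • (1 : H →L[ℂ] H)) : H →ₗ[ℂ] H)) ∧
      IsMaxCND A (LinearMap.ker ((J + Complex.I • (1 : H →L[ℂ] H)) : H →ₗ[ℂ] H)) ∧
      ((LinearMap.ker ((J + Complex.I • (1 : H →L[ℂ] H)) : H →ₗ[ℂ] H) : Set H) =
        {y : H | ∀ x ∈ LinearMap.ker ((J - Complex.I • (1 : H →L[ℂ] H)) : H →ₗ[ℂ] H), formA A x y = 0}) := by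
  have hAunit : IsUnit A := A.isUnit_iff_bijective.2 hAbij
  have hS0 : 0 ≤ S := (ContinuousLinearMap.nonneg_iff_isPositive S).2
    (ContinuousLinearMap.isPositive_def'.2 ⟨hSsa, hSpos⟩)
  have hSsq' : S * S = -(A * A) := by rw [hSsq, hskew, neg_mul]
  have hSunit : IsUnit S := isUnit_mul_self_iff.1 (hSsq' ▸ (hAunit.mul hAunit).neg)
  have hSA : Commute S A :=
    .of_mul_self_of_nonneg hS0 (hSsq' ▸ ((Commute.refl A).mul_left (.refl A)).neg_left)
  have hJstar : star J = -J :=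
    star_eq_neg_of_mul_eq hSunit hSA hJ hSsa.star_eq
      (by rw [ContinuousLinearMap.star_eq_adjoint, hskew])
  have hJskew (x y : H) : ⟪J x, y⟫ = -⟪x, J y⟫ := by
    rw [← ContinuousLinearMap.adjoint_inner_right, ← ContinuousLinearMap.star_eq_adjoint, hJstar,
      neg_apply, inner_neg_right]
  have hJJ := mul_self_eq_neg_one_of_mul_eq hSunit hSA hJ hSsq'
  have hSJ := commute_of_mul_eq_of_isUnit hSunit hSA hJ
  obtain ⟨c, hc, hcS⟩ := S.exists_pos_mul_sq_norm_le_re_inner hS0 hSunit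
  subst hJ
  exact ⟨(plusSpace_isOrtho_minusSpace hJskew).eq_orthogonal_of_sup_eq_top
      (plusSpace_sup_minusSpace hJJ), plusSpace_sup_minusSpace hJJ,
    isMaxCPD_plusSpace hc hcS hJJ, isMaxCND_minusSpace hc hcS hJJ,
    coe_minusSpace_eq_setOf_formA_eq_zero hc hcS hJJ hJskew hSJ⟩

end
end
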